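/- For all groves X, Y, Z of planar trees of positive degree, the seven dendriform trialgebra relations hold: (X ⊣ Y) ⊣ Z = X ⊣ (Y + Z); (X ⊢ Y) ⊣ Z = X ⊢ (Y ⊣ Z); (X + Y) ⊢ Z = X ⊢ (Y ⊢ Z); (X ⊢ Y) ⊥ Z = X ⊢ (Y ⊥ Z); (X ⊣ Y) ⊥ Z = X ⊥ (Y ⊢ Z); (X ⊥ Y) ⊣ Z = X ⊥ (Y ⊣ Z); and (X ⊥ Y) ⊥ Z = X ⊥ (Y ⊥ Z). -/
import Mathlib


/-- A planar tree: a leaf `|` or a grafting `x⁰ ∨ x¹ ∨ ⋯ ∨ x^k` (`k ≥ 1`) of at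
least two planar trees attached to a new root.  The children of
`node first middle last` are `first :: middle ++ [last]`. -/
inductive PT : Type
  | leaf : PT
  | node : PT → List PT → PT → PT

namespace PT

mutual
/-- Number of leaves of a planar tree. -/
def nleaves : PT → ℕ
  | leaf => 1
  | node f m l => nleaves f + nleavesList m + nleaves l

def nleavesList : List PT → ℕ
  | [] => 0
  | t :: ts => nleaves t + nleavesList ts
end

/-- The degree of a planar tree: its number of leaves minus 1. -/
def deg (t : PT) : ℕ := nleaves t - 1

/-- The set `T n` of planar trees of degree `n`. -/
def T (n : ℕ) : Set PT := {t | t.deg = n}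

mutual
/-- Number of internal vertices (grafting nodes) of a planar tree. -/
def nint : PT → ℕ
  | leaf => 0
  | node f m l => nint f + nintList m + nint l + 1

def nintList : List PT → ℕ
  | [] => 0
  | t :: ts => nint t + nintList ts
end

/-- The sum of two planar trees:
`| + y = {y}`, `x + | = {x}` and, for `x = x⁰ ∨ ⋯ ∨ x^k` and
`y = y⁰ ∨ ⋯ ∨ y^ℓ`, `x + y = (x ⊣ y) ∪ (x ⊥ y) ∪ (x ⊢ y)` where
`x ⊣ y = {x⁰ ∨ ⋯ ∨ x^{k-1} ∨ z : z ∈ x^k + y}`,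
`x ⊥ y = {x⁰ ∨ ⋯ ∨ x^{k-1} ∨ z ∨ y¹ ∨ ⋯ ∨ y^ℓ : z ∈ x^k + y⁰}` and
`x ⊢ y = {z ∨ y¹ ∨ ⋯ ∨ y^ℓ : z ∈ x + y⁰}`. -/
def psum : PT → PT → Set PT
  | leaf, y => {y}
  | node xf xm xl, leaf => {node xf xm xl}
  | node xf xm xl, node yf ym yl =>
      ((fun z => node xf xm z) '' psum xl (node yf ym yl)) ∪
      ((fun z => node xf (xm ++ z :: ym) yl) '' psum xl yf) ∪
      ((fun z => node z ym yl) '' psum (node xf xm xl) yf)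
  termination_by x y => sizeOf x + sizeOf y
  decreasing_by all_goals (simp_wf <;> omega)

/-- The left sum `x ⊣ y` of planar trees. -/
def pld : PT → PT → Set PT
  | x, leaf => {x}
  | leaf, _ => {leaf}
  | node xf xm xl, y => (fun z => node xf xm z) '' psum xl y

/-- The middle sum `x ⊥ y` of planar trees. -/
def pmd : PT → PT → Set PT
  | _, leaf => {leaf}
  | leaf, _ => {leaf}
  | node xf xm xl, node yf ym yl => (fun z => node xf (xm ++ z :: ym) yl) '' psum xl yf

/-- The right sum `x ⊢ y` of planar trees. -/
def prd : PT → PT → Set PT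
  | leaf, y => {y}
  | _, leaf => {leaf}
  | x, node yf ym yl => (fun z => node z ym yl) '' psum x yf

/-- A grove of degree `n`: a nonempty subset of `T n`. -/
def Grove (n : ℕ) (A : Set PT) : Prop := A.Nonempty ∧ ∀ x ∈ A, x.deg = n

/-- Sum of groves. -/
def pgsum (A B : Set PT) : Set PT := ⋃ x ∈ A, ⋃ y ∈ B, psum x y

/-- Left sum of groves. -/
def pgl (A B : Set PT) : Set PT := ⋃ x ∈ A, ⋃ y ∈ B, pld x y

/-- Middle sum of groves. -/
def pgm (A B : Set PT) : Set PT := ⋃ x ∈ A, ⋃ y ∈ B, pmd x y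

/-- Right sum of groves. -/
def pgr (A B : Set PT) : Set PT := ⋃ x ∈ A, ⋃ y ∈ B, prd x y

end PT

namespace PT

lemma psum_leaf_left (y : PT) : psum leaf y = {y} := by cases y <;> rw [psum]

lemma psum_leaf_right (x : PT) : psum x leaf = {x} := by cases x <;> rw [psum]

lemma psum_node_node (xf yf : PT) (xm ym : List PT) (xl yl : PT) :
    psum (node xf xm xl) (node yf ym yl) =
      ((fun z => node xf xm z) '' psum xl (node yf ym yl)) ∪
      ((fun z => node xf (xm ++ z :: ym) yl) '' psum xl yf) ∪
      ((fun z => node z ym yl) '' psum (node xf xm xl) yf) := by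
  rw [psum]

end PT

namespace PT

lemma mem_psum_left {u : PT} (xf : PT) (xm : List PT) {xl yf : PT} {ym : List PT} {yl : PT}
    (h : u ∈ psum xl (node yf ym yl)) :
    node xf xm u ∈ psum (node xf xm xl) (node yf ym yl) := by
  rw [psum_node_node]; exact Or.inl (Or.inl ⟨u, h, rfl⟩)

lemma mem_psum_mid {u : PT} {xf : PT} {xm : List PT} {xl yf : PT} {ym : List PT} {yl : PT}
    (h : u ∈ psum xl yf) :
    node xf (xm ++ u :: ym) yl ∈ psum (node xf xm xl) (node yf ym yl) := by
  rw [psum_node_node]; exact Or.inl (Or.inr ⟨u, h, rfl⟩)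

lemma mem_psum_right {u : PT} {xf : PT} {xm : List PT} {xl yf : PT} {ym : List PT} {yl : PT}
    (h : u ∈ psum (node xf xm xl) yf) :
    node u ym yl ∈ psum (node xf xm xl) (node yf ym yl) := by
  rw [psum_node_node]; exact Or.inr ⟨u, h, rfl⟩

lemma mem_psum_node_iff {t : PT} {xf : PT} {xm : List PT} {xl yf : PT} {ym : List PT} {yl : PT} :
    t ∈ psum (node xf xm xl) (node yf ym yl) ↔
      (∃ u ∈ psum xl (node yf ym yl), node xf xm u = t) ∨
      (∃ u ∈ psum xl yf, node xf (xm ++ u :: ym) yl = t) ∨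
      (∃ u ∈ psum (node xf xm xl) yf, node u ym yl = t) := by
  rw [psum_node_node]
  simp only [Set.mem_union, Set.mem_image, or_assoc]

lemma exists_node_of_mem_psum {x yf : PT} {ym : List PT} {yl v : PT}
    (h : v ∈ psum x (node yf ym yl)) : ∃ f m l, v = node f m l := by
  cases x with
  | leaf =>
      rw [psum_leaf_left] at h
      exact ⟨yf, ym, yl, Set.mem_singleton_iff.mp h⟩
  | node xf xm xl =>
      rw [mem_psum_node_iff] at h
      rcases h with ⟨u, _, rfl⟩ | ⟨u, _, rfl⟩ | ⟨u, _, rfl⟩ <;> exact ⟨_, _, _, rfl⟩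

theorem psum_assoc (a b c : PT) :
    ∀ t, (∃ w ∈ psum a b, t ∈ psum w c) ↔ (∃ v ∈ psum b c, t ∈ psum a v) := by
  match a, b, c with
  | leaf, b, c => simp [psum_leaf_left]
  | node af am al, leaf, c => simp [psum_leaf_left, psum_leaf_right]
  | node af am al, node bf bm bl, leaf => simp [psum_leaf_right]
  | node af am al, node bf bm bl, node cf cm cl =>
    intro t
    have IH1 := psum_assoc al (node bf bm bl) (node cf cm cl)
    have IH2 := psum_assoc al (node bf bm bl) cf
    have IH3 := psum_assoc (node af am al) (node bf bm bl) cf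
    constructor
    · rintro ⟨w, hw, ht⟩
      rw [mem_psum_node_iff] at hw
      rcases hw with ⟨u, hu, rfl⟩ | ⟨u, hu, rfl⟩ | ⟨u, hu, rfl⟩
      · rw [mem_psum_node_iff] at ht
        rcases ht with ⟨s, hs, rfl⟩ | ⟨s, hs, rfl⟩ | ⟨s, hs, rfl⟩
        · obtain ⟨v, hv, hsv⟩ := (IH1 s).mp ⟨u, hu, hs⟩
          obtain ⟨vf, vm, vl, rfl⟩ := exists_node_of_mem_psum hv
          exact ⟨_, hv, mem_psum_left af am hsv⟩
        · obtain ⟨v, hv, hsv⟩ := (IH2 s).mp ⟨u, hu, hs⟩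
          exact ⟨node v cm cl, mem_psum_right hv, mem_psum_mid hsv⟩
        · obtain ⟨v, hv, hsv⟩ := (IH3 s).mp ⟨node af am u, mem_psum_left af am hu, hs⟩
          exact ⟨node v cm cl, mem_psum_right hv, mem_psum_right hsv⟩
      · rw [mem_psum_node_iff] at ht
        rcases ht with ⟨s, hs, rfl⟩ | ⟨s, hs, rfl⟩ | ⟨s, hs, rfl⟩
        · exact ⟨node bf bm s, mem_psum_left bf bm hs, mem_psum_mid hu⟩
        · refine ⟨node bf (bm ++ s :: cm) cl, mem_psum_mid hs, ?_⟩
          simpa [List.append_assoc] using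
            mem_psum_mid (xf := af) (xm := am) (ym := bm ++ s :: cm) (yl := cl) hu
        · obtain ⟨v, hv, hsv⟩ := (IH3 s).mp ⟨node af (am ++ u :: bm) bl, mem_psum_mid hu, hs⟩
          exact ⟨node v cm cl, mem_psum_right hv, mem_psum_right hsv⟩
      · rw [mem_psum_node_iff] at ht
        rcases ht with ⟨s, hs, rfl⟩ | ⟨s, hs, rfl⟩ | ⟨s, hs, rfl⟩
        · exact ⟨node bf bm s, mem_psum_left bf bm hs, mem_psum_right hu⟩
        · exact ⟨node bf (bm ++ s :: cm) cl, mem_psum_mid hs, mem_psum_right hu⟩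
        · obtain ⟨v, hv, hsv⟩ := (IH3 s).mp ⟨node u bm bl, mem_psum_right hu, hs⟩
          exact ⟨node v cm cl, mem_psum_right hv, mem_psum_right hsv⟩
    · rintro ⟨v, hv, ht⟩
      rw [mem_psum_node_iff] at hv
      rcases hv with ⟨u, hu, rfl⟩ | ⟨u, hu, rfl⟩ | ⟨u, hu, rfl⟩
      · rw [mem_psum_node_iff] at ht
        rcases ht with ⟨s, hs, rfl⟩ | ⟨s, hs, rfl⟩ | ⟨s, hs, rfl⟩
        · obtain ⟨w, hw, hsw⟩ := (IH1 s).mpr ⟨node bf bm u, mem_psum_left bf bm hu, hs⟩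
          exact ⟨node af am w, mem_psum_left af am hw, mem_psum_left af am hsw⟩
        · exact ⟨node af (am ++ s :: bm) bl, mem_psum_mid hs, mem_psum_left af _ hu⟩
        · exact ⟨node s bm bl, mem_psum_right hs, mem_psum_left s bm hu⟩
      · rw [mem_psum_node_iff] at ht
        rcases ht with ⟨s, hs, rfl⟩ | ⟨s, hs, rfl⟩ | ⟨s, hs, rfl⟩
        · obtain ⟨w, hw, hsw⟩ := (IH1 s).mpr ⟨node bf (bm ++ u :: cm) cl, mem_psum_mid hu, hs⟩
          exact ⟨node af am w, mem_psum_left af am hw, mem_psum_left af am hsw⟩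
        · refine ⟨node af (am ++ s :: bm) bl, mem_psum_mid hs, ?_⟩
          simpa [List.append_assoc] using
            mem_psum_mid (xf := af) (xm := am ++ s :: bm) (ym := cm) (yl := cl) hu
        · exact ⟨node s bm bl, mem_psum_right hs, mem_psum_mid hu⟩
      · rw [mem_psum_node_iff] at ht
        rcases ht with ⟨s, hs, rfl⟩ | ⟨s, hs, rfl⟩ | ⟨s, hs, rfl⟩
        · obtain ⟨w, hw, hsw⟩ := (IH1 s).mpr ⟨node u cm cl, mem_psum_right hu, hs⟩
          exact ⟨node af am w, mem_psum_left af am hw, mem_psum_left af am hsw⟩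
        · obtain ⟨w, hw, hsw⟩ := (IH2 s).mpr ⟨u, hu, hs⟩
          exact ⟨node af am w, mem_psum_left af am hw, mem_psum_mid hsw⟩
        · obtain ⟨w, hw, hsw⟩ := (IH3 s).mpr ⟨u, hu, hs⟩
          obtain ⟨wf, wm, wl, rfl⟩ := exists_node_of_mem_psum hw
          exact ⟨_, hw, mem_psum_right hsw⟩
  termination_by sizeOf a + sizeOf c
  decreasing_by all_goals (simp_wf <;> omega)

end PT

namespace PT

lemma pld_node_node (xf yf : PT) (xm ym : List PT) (xl yl : PT) :
    pld (node xf xm xl) (node yf ym yl) =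
      (fun z => node xf xm z) '' psum xl (node yf ym yl) := by
  rw [pld] <;> simp

lemma pmd_node_node (xf yf : PT) (xm ym : List PT) (xl yl : PT) :
    pmd (node xf xm xl) (node yf ym yl) =
      (fun z => node xf (xm ++ z :: ym) yl) '' psum xl yf := by
  rw [pmd] <;> simp

lemma prd_node_node (xf yf : PT) (xm ym : List PT) (xl yl : PT) :
    prd (node xf xm xl) (node yf ym yl) =
      (fun z => node z ym yl) '' psum (node xf xm xl) yf := by
  rw [prd] <;> simp

lemma mem_pld_iff {t xf : PT} {xm : List PT} {xl yf : PT} {ym : List PT} {yl : PT} :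
    t ∈ pld (node xf xm xl) (node yf ym yl) ↔
      ∃ u ∈ psum xl (node yf ym yl), node xf xm u = t := by
  rw [pld_node_node]; simp only [Set.mem_image]

lemma mem_pmd_iff {t xf : PT} {xm : List PT} {xl yf : PT} {ym : List PT} {yl : PT} :
    t ∈ pmd (node xf xm xl) (node yf ym yl) ↔
      ∃ u ∈ psum xl yf, node xf (xm ++ u :: ym) yl = t := by
  rw [pmd_node_node]; simp only [Set.mem_image]

lemma mem_prd_iff {t xf : PT} {xm : List PT} {xl yf : PT} {ym : List PT} {yl : PT} :
    t ∈ prd (node xf xm xl) (node yf ym yl) ↔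
      ∃ u ∈ psum (node xf xm xl) yf, node u ym yl = t := by
  rw [prd_node_node]; simp only [Set.mem_image]

end PT

namespace PT

variable {xf : PT} {xm : List PT} {xl yf : PT} {ym : List PT} {yl zf : PT} {zm : List PT} {zl t : PT}

local notation "x'" => node xf xm xl
local notation "y'" => node yf ym yl
local notation "z'" => node zf zm zl

lemma tL1 : (∃ w ∈ pld x' y', t ∈ pld w z') ↔ ∃ v ∈ psum y' z', t ∈ pld x' v := by
  constructor
  · rintro ⟨w, hw, ht⟩
    rw [mem_pld_iff] at hw
    obtain ⟨u, hu, rfl⟩ := hw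
    rw [mem_pld_iff] at ht
    obtain ⟨s, hs, rfl⟩ := ht
    obtain ⟨v, hv, hsv⟩ := (psum_assoc xl y' z' s).mp ⟨u, hu, hs⟩
    obtain ⟨vf, vm, vl, rfl⟩ := exists_node_of_mem_psum hv
    exact ⟨_, hv, mem_pld_iff.mpr ⟨s, hsv, rfl⟩⟩
  · rintro ⟨v, hv, ht⟩
    obtain ⟨vf, vm, vl, rfl⟩ := exists_node_of_mem_psum hv
    rw [mem_pld_iff] at ht
    obtain ⟨s, hs, rfl⟩ := ht
    obtain ⟨u, hu, hsu⟩ := (psum_assoc xl y' z' s).mpr ⟨_, hv, hs⟩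
    exact ⟨node xf xm u, mem_pld_iff.mpr ⟨u, hu, rfl⟩, mem_pld_iff.mpr ⟨s, hsu, rfl⟩⟩

lemma tL2 : (∃ w ∈ prd x' y', t ∈ pld w z') ↔ ∃ v ∈ pld y' z', t ∈ prd x' v := by
  constructor
  · rintro ⟨w, hw, ht⟩
    rw [mem_prd_iff] at hw
    obtain ⟨u, hu, rfl⟩ := hw
    rw [mem_pld_iff] at ht
    obtain ⟨s, hs, rfl⟩ := ht
    exact ⟨node yf ym s, mem_pld_iff.mpr ⟨s, hs, rfl⟩, mem_prd_iff.mpr ⟨u, hu, rfl⟩⟩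
  · rintro ⟨v, hv, ht⟩
    rw [mem_pld_iff] at hv
    obtain ⟨s, hs, rfl⟩ := hv
    rw [mem_prd_iff] at ht
    obtain ⟨u, hu, rfl⟩ := ht
    exact ⟨node u ym yl, mem_prd_iff.mpr ⟨u, hu, rfl⟩, mem_pld_iff.mpr ⟨s, hs, rfl⟩⟩

lemma tL3 : (∃ w ∈ psum x' y', t ∈ prd w z') ↔ ∃ v ∈ prd y' z', t ∈ prd x' v := by
  constructor
  · rintro ⟨w, hw, ht⟩
    obtain ⟨wf, wm, wl, rfl⟩ := exists_node_of_mem_psum hw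
    rw [mem_prd_iff] at ht
    obtain ⟨s, hs, rfl⟩ := ht
    obtain ⟨v, hv, hsv⟩ := (psum_assoc x' y' zf s).mp ⟨_, hw, hs⟩
    exact ⟨node v zm zl, mem_prd_iff.mpr ⟨v, hv, rfl⟩, mem_prd_iff.mpr ⟨s, hsv, rfl⟩⟩
  · rintro ⟨v, hv, ht⟩
    rw [mem_prd_iff] at hv
    obtain ⟨u, hu, rfl⟩ := hv
    rw [mem_prd_iff] at ht
    obtain ⟨s, hs, rfl⟩ := ht
    obtain ⟨w, hw, hsw⟩ := (psum_assoc x' y' zf s).mpr ⟨u, hu, hs⟩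
    obtain ⟨wf, wm, wl, rfl⟩ := exists_node_of_mem_psum hw
    exact ⟨_, hw, mem_prd_iff.mpr ⟨s, hsw, rfl⟩⟩

lemma tL4 : (∃ w ∈ prd x' y', t ∈ pmd w z') ↔ ∃ v ∈ pmd y' z', t ∈ prd x' v := by
  constructor
  · rintro ⟨w, hw, ht⟩
    rw [mem_prd_iff] at hw
    obtain ⟨u, hu, rfl⟩ := hw
    rw [mem_pmd_iff] at ht
    obtain ⟨s, hs, rfl⟩ := ht
    exact ⟨node yf (ym ++ s :: zm) zl, mem_pmd_iff.mpr ⟨s, hs, rfl⟩,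
      mem_prd_iff.mpr ⟨u, hu, rfl⟩⟩
  · rintro ⟨v, hv, ht⟩
    rw [mem_pmd_iff] at hv
    obtain ⟨s, hs, rfl⟩ := hv
    rw [mem_prd_iff] at ht
    obtain ⟨u, hu, rfl⟩ := ht
    exact ⟨node u ym yl, mem_prd_iff.mpr ⟨u, hu, rfl⟩, mem_pmd_iff.mpr ⟨s, hs, rfl⟩⟩

lemma tL5 : (∃ w ∈ pld x' y', t ∈ pmd w z') ↔ ∃ v ∈ prd y' z', t ∈ pmd x' v := by
  constructor
  · rintro ⟨w, hw, ht⟩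
    rw [mem_pld_iff] at hw
    obtain ⟨u, hu, rfl⟩ := hw
    rw [mem_pmd_iff] at ht
    obtain ⟨s, hs, rfl⟩ := ht
    obtain ⟨v, hv, hsv⟩ := (psum_assoc xl y' zf s).mp ⟨u, hu, hs⟩
    exact ⟨node v zm zl, mem_prd_iff.mpr ⟨v, hv, rfl⟩, mem_pmd_iff.mpr ⟨s, hsv, rfl⟩⟩
  · rintro ⟨v, hv, ht⟩
    rw [mem_prd_iff] at hv
    obtain ⟨v0, hv0, rfl⟩ := hv
    rw [mem_pmd_iff] at ht
    obtain ⟨s, hs, rfl⟩ := ht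
    obtain ⟨u, hu, hsu⟩ := (psum_assoc xl y' zf s).mpr ⟨v0, hv0, hs⟩
    exact ⟨node xf xm u, mem_pld_iff.mpr ⟨u, hu, rfl⟩, mem_pmd_iff.mpr ⟨s, hsu, rfl⟩⟩

lemma tL6 : (∃ w ∈ pmd x' y', t ∈ pld w z') ↔ ∃ v ∈ pld y' z', t ∈ pmd x' v := by
  constructor
  · rintro ⟨w, hw, ht⟩
    rw [mem_pmd_iff] at hw
    obtain ⟨u, hu, rfl⟩ := hw
    rw [mem_pld_iff] at ht
    obtain ⟨s, hs, rfl⟩ := ht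
    exact ⟨node yf ym s, mem_pld_iff.mpr ⟨s, hs, rfl⟩, mem_pmd_iff.mpr ⟨u, hu, rfl⟩⟩
  · rintro ⟨v, hv, ht⟩
    rw [mem_pld_iff] at hv
    obtain ⟨s, hs, rfl⟩ := hv
    rw [mem_pmd_iff] at ht
    obtain ⟨u, hu, rfl⟩ := ht
    exact ⟨node xf (xm ++ u :: ym) yl, mem_pmd_iff.mpr ⟨u, hu, rfl⟩,
      mem_pld_iff.mpr ⟨s, hs, rfl⟩⟩

lemma tL7 : (∃ w ∈ pmd x' y', t ∈ pmd w z') ↔ ∃ v ∈ pmd y' z', t ∈ pmd x' v := by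
  constructor
  · rintro ⟨w, hw, ht⟩
    rw [mem_pmd_iff] at hw
    obtain ⟨u, hu, rfl⟩ := hw
    rw [mem_pmd_iff] at ht
    obtain ⟨s, hs, rfl⟩ := ht
    refine ⟨node yf (ym ++ s :: zm) zl, mem_pmd_iff.mpr ⟨s, hs, rfl⟩,
      mem_pmd_iff.mpr ⟨u, hu, ?_⟩⟩
    simp [List.append_assoc]
  · rintro ⟨v, hv, ht⟩
    rw [mem_pmd_iff] at hv
    obtain ⟨s, hs, rfl⟩ := hv
    rw [mem_pmd_iff] at ht
    obtain ⟨u, hu, rfl⟩ := ht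
    refine ⟨node xf (xm ++ u :: ym) yl, mem_pmd_iff.mpr ⟨u, hu, rfl⟩,
      mem_pmd_iff.mpr ⟨s, hs, ?_⟩⟩
    simp [List.append_assoc]

end PT

namespace PT

lemma node_of_deg_pos {t : PT} (h : 0 < t.deg) : ∃ a b c, t = node a b c := by
  cases t with
  | leaf => simp [deg, nleaves] at h
  | node a b c => exact ⟨a, b, c, rfl⟩

lemma grove_lift (f g h k : PT → PT → Set PT)
    (H : ∀ (xf : PT) (xm : List PT) (xl yf : PT) (ym : List PT) (yl zf : PT)
      (zm : List PT) (zl t : PT),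
      (∃ w ∈ f (node xf xm xl) (node yf ym yl), t ∈ g w (node zf zm zl)) ↔
      (∃ v ∈ h (node yf ym yl) (node zf zm zl), t ∈ k (node xf xm xl) v))
    {X Y Z : Set PT}
    (hX : ∀ x ∈ X, ∃ a b c, x = node a b c)
    (hY : ∀ y ∈ Y, ∃ a b c, y = node a b c)
    (hZ : ∀ z ∈ Z, ∃ a b c, z = node a b c) :
    (⋃ w ∈ ⋃ x ∈ X, ⋃ y ∈ Y, f x y, ⋃ z ∈ Z, g w z) =
    ⋃ x ∈ X, ⋃ v ∈ ⋃ y ∈ Y, ⋃ z ∈ Z, h y z, k x v := by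
  ext t
  simp only [Set.mem_iUnion, exists_prop]
  constructor
  · rintro ⟨w, ⟨x, hx, y, hy, hw⟩, z, hz, ht⟩
    obtain ⟨a, b, c, rfl⟩ := hX x hx
    obtain ⟨a', b', c', rfl⟩ := hY y hy
    obtain ⟨a'', b'', c'', rfl⟩ := hZ z hz
    obtain ⟨v, hv, ht'⟩ := (H a b c a' b' c' a'' b'' c'' t).mp ⟨w, hw, ht⟩
    exact ⟨_, hx, v, ⟨_, hy, _, hz, hv⟩, ht'⟩
  · rintro ⟨x, hx, v, ⟨y, hy, z, hz, hv⟩, ht⟩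
    obtain ⟨a, b, c, rfl⟩ := hX x hx
    obtain ⟨a', b', c', rfl⟩ := hY y hy
    obtain ⟨a'', b'', c'', rfl⟩ := hZ z hz
    obtain ⟨w, hw, ht'⟩ := (H a b c a' b' c' a'' b'' c'' t).mpr ⟨v, hv, ht⟩
    exact ⟨w, ⟨_, hx, _, hy, hw⟩, _, hz, ht'⟩

end PT

open PT in
/-- the seven dendriform trialgebra relations hold for groves of
planar trees of positive degree. -/
theorem grove_tridendriform (n m p : ℕ) (hn : 0 < n) (hm : 0 < m) (hp : 0 < p)
    (X Y Z : Set PT) (hX : PT.Grove n X) (hY : PT.Grove m Y) (hZ : PT.Grove p Z) :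
    pgl (pgl X Y) Z = pgl X (pgsum Y Z) ∧
    pgl (pgr X Y) Z = pgr X (pgl Y Z) ∧
    pgr (pgsum X Y) Z = pgr X (pgr Y Z) ∧
    pgm (pgr X Y) Z = pgr X (pgm Y Z) ∧
    pgm (pgl X Y) Z = pgm X (pgr Y Z) ∧
    pgl (pgm X Y) Z = pgm X (pgl Y Z) ∧
    pgm (pgm X Y) Z = pgm X (pgm Y Z) := by
  have hX' : ∀ x ∈ X, ∃ a b c, x = node a b c :=
    fun x hx => node_of_deg_pos (hX.2 x hx ▸ hn)
  have hY' : ∀ y ∈ Y, ∃ a b c, y = node a b c :=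
    fun y hy => node_of_deg_pos (hY.2 y hy ▸ hm)
  have hZ' : ∀ z ∈ Z, ∃ a b c, z = node a b c :=
    fun z hz => node_of_deg_pos (hZ.2 z hz ▸ hp)
  refine ⟨?_, ?_, ?_, ?_, ?_, ?_, ?_⟩
  · exact grove_lift pld pld psum pld (fun a b c d e f g h i j => @tL1 a b c d e f g h i j) hX' hY' hZ'
  · exact grove_lift prd pld pld prd (fun a b c d e f g h i j => @tL2 a b c d e f g h i j) hX' hY' hZ'
  · exact grove_lift psum prd prd prd (fun a b c d e f g h i j => @tL3 a b c d e f g h i j) hX' hY' hZ'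
  · exact grove_lift prd pmd pmd prd (fun a b c d e f g h i j => @tL4 a b c d e f g h i j) hX' hY' hZ'
  · exact grove_lift pld pmd prd pmd (fun a b c d e f g h i j => @tL5 a b c d e f g h i j) hX' hY' hZ'
  · exact grove_lift pmd pld pld pmd (fun a b c d e f g h i j => @tL6 a b c d e f g h i j) hX' hY' hZ'
  · exact grove_lift pmd pmd pmd pmd (fun a b c d e f g h i j => @tL7 a b c d e f g h i j) hX' hY' hZ'
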